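/- Let ⟨T, Σ, C₁ ⊑ C₂⟩ with Σ = N_C be an EL TBox abduction problem with T in normal form and ⊤-free, Φ its first-order translation and Φ_p its presaturation. Let F = (V,E,s) be a Skolem tree with positive labeling l⁺, and v₁, v₂ ∈ V with v₁ an ancestor of v₂, s(v₁) = sk(t) for a Skolem function sk, and l⁺(v₂) ≠ ∅. Then A_sk(s(v₁)) ∈ PI^{g+}_{N_C}(Φ), and for every A ∈ l⁺(v₂) there is a resolution derivation of A(s(v₂)) from A_sk(s(v₁)) together with the I3-, I4- and I7-clauses of Φ_p. -/
import Mathlib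


namespace ELAbd

/-! ### EL concepts, TBoxes, semantics -/

inductive ELConcept : Type where
  | top : ELConcept
  | atom : ℕ → ELConcept
  | conj : ELConcept → ELConcept → ELConcept
  | ex : ℕ → ELConcept → ELConcept
deriving DecidableEq

abbrev CI := ELConcept × ELConcept
abbrev TBox := Finset CI

structure Interp (α : Type) where
  conc : ℕ → Set α
  role : ℕ → Set (α × α)

def ELConcept.sem {α : Type} (I : Interp α) : ELConcept → Set α
  | .top => Set.univ
  | .atom A => I.conc A
  | .conj C D => C.sem I ∩ D.sem I
  | .ex r C => {d | ∃ e, (d, e) ∈ I.role r ∧ e ∈ C.sem I}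

def Models {α : Type} (I : Interp α) (T : TBox) : Prop :=
  ∀ ci ∈ T, ci.1.sem I ⊆ ci.2.sem I

def Entails (T : TBox) (C D : ELConcept) : Prop :=
  ∀ (α : Type) (I : Interp α), Models I T → C.sem I ⊆ D.sem I

def EntailsCI (T : TBox) (ci : CI) : Prop := Entails T ci.1 ci.2

def TEntails (T T' : TBox) : Prop :=
  ∀ (α : Type) (I : Interp α), Models I T → Models I T'

def TEquiv (T T' : TBox) : Prop := TEntails T T' ∧ TEntails T' T

/-- Equality of concepts modulo the convention that conjunctions are read as
sets (associativity, commutativity, idempotence, `⊤` as empty conjunction). -/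
inductive CEq : ELConcept → ELConcept → Prop
  | refl (C) : CEq C C
  | symm {C D} : CEq C D → CEq D C
  | trans {C D E} : CEq C D → CEq D E → CEq C E
  | congr_conj {C C' D D'} : CEq C C' → CEq D D' → CEq (.conj C D) (.conj C' D')
  | congr_ex {r C C'} : CEq C C' → CEq (.ex r C) (.ex r C')
  | comm (C D) : CEq (.conj C D) (.conj D C)
  | assoc (C D E) : CEq (.conj (.conj C D) E) (.conj C (.conj D E))
  | idem (C) : CEq (.conj C C) C
  | top_unit (C) : CEq (.conj .top C) C

/-- The relation `≼⊓` on concepts. -/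
inductive PrecSq : ELConcept → ELConcept → Prop
  | refl (C) : PrecSq C C
  | conjL {C D'} (D'') : PrecSq C D' → PrecSq C (.conj D' D'')
  | ex (r) {C' D'} : PrecSq C' D' → PrecSq (.ex r C') (.ex r D')

def ELConcept.concNames : ELConcept → Set ℕ
  | .top => ∅
  | .atom A => {A}
  | .conj C D => C.concNames ∪ D.concNames
  | .ex _ C => C.concNames

def ELConcept.roleNames : ELConcept → Set ℕ
  | .top => ∅
  | .atom _ => ∅
  | .conj C D => C.roleNames ∪ D.roleNames
  | .ex r C => {r} ∪ C.roleNames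

def ELConcept.size : ELConcept → ℕ
  | .top => 1
  | .atom _ => 1
  | .conj C D => C.size + D.size + 1
  | .ex _ C => C.size + 1

def ELConcept.exCount : ELConcept → ℕ
  | .top => 0
  | .atom _ => 0
  | .conj C D => C.exCount + D.exCount
  | .ex _ C => C.exCount + 1

def tboxSize (T : TBox) : ℕ := T.sum (fun ci => ci.1.size + ci.2.size)

def tboxConcNames (T : TBox) : Set ℕ :=
  {A | ∃ ci ∈ T, A ∈ ci.1.concNames ∪ ci.2.concNames}

def tboxRoleNames (T : TBox) : Set ℕ :=
  {r | ∃ ci ∈ T, r ∈ ci.1.roleNames ∪ ci.2.roleNames}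

/-- Normal form (simultaneously `⊤`-free): every CI has one of the four shapes
`A ⊑ B`, `A₁ ⊓ A₂ ⊑ B`, `∃r.A ⊑ B`, `A ⊑ ∃r.B` with atomic concepts. -/
def NFci (ci : CI) : Prop :=
  (∃ A B, ci = (ELConcept.atom A, ELConcept.atom B)) ∨
  (∃ A₁ A₂ B, ci = (ELConcept.conj (.atom A₁) (.atom A₂), ELConcept.atom B)) ∨
  (∃ r A B, ci = (ELConcept.ex r (.atom A), ELConcept.atom B)) ∨
  (∃ A r B, ci = (ELConcept.atom A, ELConcept.ex r (.atom B)))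

def NormalForm (T : TBox) : Prop := ∀ ci ∈ T, NFci ci

/-- Normal form where the components may also be `⊤`. -/
def AtomTop (C : ELConcept) : Prop := C = .top ∨ ∃ A, C = ELConcept.atom A

def NFciTop (ci : CI) : Prop :=
  (AtomTop ci.1 ∧ AtomTop ci.2) ∨
  (∃ A₁ A₂, ci.1 = ELConcept.conj A₁ A₂ ∧ AtomTop A₁ ∧ AtomTop A₂ ∧ AtomTop ci.2) ∨
  (∃ r A, ci.1 = ELConcept.ex r A ∧ AtomTop A ∧ AtomTop ci.2) ∨
  (∃ r B, ci.2 = ELConcept.ex r B ∧ AtomTop B ∧ AtomTop ci.1)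

def NormalFormTop (T : TBox) : Prop := ∀ ci ∈ T, NFciTop ci

/-! ### EL description trees -/

noncomputable def conjOf (s : Finset ℕ) : ELConcept :=
  (s.toList.map ELConcept.atom).foldr ELConcept.conj ELConcept.top

structure DescTree where
  V : Finset ℕ
  root : ℕ
  E : Finset (ℕ × ℕ × ℕ)      -- (v, r, w) : edge from v to w labeled r
  label : ℕ → Finset ℕ
  dep : ℕ → ℕ
  root_mem : root ∈ V
  edge_mem : ∀ e ∈ E, e.1 ∈ V ∧ e.2.2 ∈ V
  parent_unique : ∀ e ∈ E, ∀ e' ∈ E, e.2.2 = e'.2.2 → e = e'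
  parent_exists : ∀ v ∈ V, v ≠ root → ∃ e ∈ E, e.2.2 = v
  dep_root : dep root = 0
  dep_edge : ∀ e ∈ E, dep e.2.2 = dep e.1 + 1

noncomputable def DescTree.conceptAt (t : DescTree) : ℕ → ℕ → ELConcept
  | 0, v => conjOf (t.label v)
  | n + 1, v =>
      ((t.label v).toList.map ELConcept.atom ++
        (t.E.filter (fun e => e.1 = v)).toList.map
          (fun e => ELConcept.ex e.2.1 (t.conceptAt n e.2.2))).foldr ELConcept.conj ELConcept.top

/-- The concept `C_𝔗` represented by a description tree. -/
noncomputable def DescTree.concept (t : DescTree) : ELConcept := t.conceptAt t.V.card t.root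

/-- `t` is a description tree for the concept `D` (concept equality is taken modulo
the conjunctions-as-sets convention). -/
def Represents (t : DescTree) (D : ELConcept) : Prop := CEq t.concept D

/-- Weak homomorphism from `src` to `tgt`. -/
def WeakHom (src tgt : DescTree) (φ : ℕ → ℕ) : Prop :=
  φ src.root = tgt.root ∧ ∀ e ∈ src.E, (φ e.1, e.2.1, φ e.2.2) ∈ tgt.E

/-- `T`-homomorphism from `src` to `tgt`. -/
def THom (T : TBox) (src tgt : DescTree) (φ : ℕ → ℕ) : Prop :=
  WeakHom src tgt φ ∧
  ∀ w ∈ src.V, Entails T (conjOf (tgt.label (φ w))) (conjOf (src.label w))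

/-! ### Abduction problems, hypotheses, connection minimality -/

inductive AtomConj (S : Set ℕ) : ELConcept → Prop
  | atom {A} : A ∈ S → AtomConj S (.atom A)
  | conj {C D} : AtomConj S C → AtomConj S D → AtomConj S (.conj C D)

def IsHypothesis (T : TBox) (S : Set ℕ) (C1 C2 : ℕ) (H : TBox) : Prop :=
  (∀ ci ∈ H, (AtomConj S ci.1 ∨ ci.1 = ELConcept.top) ∧ AtomConj S ci.2) ∧
  Entails (T ∪ H) (.atom C1) (.atom C2) ∧
  ∀ ci ∈ H, ¬ EntailsCI T ci

def BuiltOver (S : Set ℕ) (C : ELConcept) : Prop := C.concNames ⊆ S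

/-- The TBox determined by condition (4) of the definition of connection minimality. -/
def hypSetOf (T : TBox) (t1 t2 : DescTree) (φ : ℕ → ℕ) : Set CI :=
  {ci | ∃ w ∈ t2.V, ci = (conjOf (t1.label (φ w)), conjOf (t2.label w)) ∧
        ¬ EntailsCI T ci}

/-- Conditions (1)–(4) of connection minimality, with explicit witnessing
description trees `t1`, `t2` for `D1`, `D2` and the weak homomorphism `φ`
from `𝔗_{D₂}` to `𝔗_{D₁}`. -/
def ConnMinimalWit (T : TBox) (S : Set ℕ) (C1 C2 : ℕ) (H : TBox)
    (D1 D2 : ELConcept) (t1 t2 : DescTree) (φ : ℕ → ℕ) : Prop :=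
  BuiltOver S D1 ∧ BuiltOver S D2 ∧
  Represents t1 D1 ∧ Represents t2 D2 ∧
  Entails T (.atom C1) D1 ∧
  Entails T D2 (.atom C2) ∧
  (∀ D2', Entails T D2' (.atom C2) → PrecSq D2' D2 → PrecSq D2 D2') ∧
  WeakHom t2 t1 φ ∧
  (↑H : Set CI) = hypSetOf T t1 t2 φ

def ConnMinimal (T : TBox) (S : Set ℕ) (C1 C2 : ℕ) (H : TBox) : Prop :=
  IsHypothesis T S C1 C2 H ∧
  ∃ D1 D2 t1 t2 φ, ConnMinimalWit T S C1 C2 H D1 D2 t1 t2 φ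

/-- Packedness of a witness: no alternative `D₁'`, `φ'` (for the same `D₂`, `t₂`)
strictly enlarges one of the left-hand side labels while keeping all others. -/
def PackedWit (T : TBox) (S : Set ℕ) (C1 : ℕ) (t1 t2 : DescTree) (φ : ℕ → ℕ) : Prop :=
  ¬ ∃ (D1' : ELConcept) (t1' : DescTree) (φ' : ℕ → ℕ) (w : ℕ),
      BuiltOver S D1' ∧ Represents t1' D1' ∧ Entails T (.atom C1) D1' ∧
      WeakHom t2 t1' φ' ∧ w ∈ t2.V ∧
      t1.label (φ w) ⊂ t1'.label (φ' w) ∧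
      ∀ w' ∈ t2.V, w' ≠ w → t1.label (φ w') = t1'.label (φ' w')

def PackedConnMinimal (T : TBox) (S : Set ℕ) (C1 C2 : ℕ) (H : TBox) : Prop :=
  IsHypothesis T S C1 C2 H ∧
  ∃ D1 D2 t1 t2 φ, ConnMinimalWit T S C1 C2 H D1 D2 t1 t2 φ ∧
    PackedWit T S C1 t1 t2 φ

/-! ### First-order logic: terms, clauses, semantics -/

/-- Skolem functions: one for each (copy, axiom) pair. -/
abbrev SkFun := Bool × CI

inductive Term : Type where
  | var : ℕ → Term
  | sk0 : Term
  | app : SkFun → Term → Term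
deriving DecidableEq

/-- Ground Skolem terms. -/
inductive GTerm : Type where
  | sk0 : GTerm
  | app : SkFun → GTerm → GTerm
deriving DecidableEq

def GTerm.toTerm : GTerm → Term
  | .sk0 => .sk0
  | .app f t => .app f t.toTerm

def GTerm.depth : GTerm → ℕ
  | .sk0 => 0
  | .app _ t => t.depth + 1

inductive GTerm.Subterm : GTerm → GTerm → Prop
  | refl (t) : GTerm.Subterm t t
  | app {s t} (f) : GTerm.Subterm s t → GTerm.Subterm s (.app f t)

/-- Atoms; unary predicates `(b, A)` where `b = false` marks the original copy of the
atomic concept `A` and `b = true` its duplicate `Ā`. -/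
inductive Atm : Type where
  | conc : (Bool × ℕ) → Term → Atm
  | role : ℕ → Term → Term → Atm
deriving DecidableEq

structure Lit : Type where
  pos : Bool
  atm : Atm
deriving DecidableEq

abbrev Clause := Finset Lit

inductive GAtm : Type where
  | conc : (Bool × ℕ) → GTerm → GAtm
  | role : ℕ → GTerm → GTerm → GAtm
deriving DecidableEq

def GAtm.toAtm : GAtm → Atm
  | .conc P t => .conc P t.toTerm
  | .role r t u => .role r t.toTerm u.toTerm

structure FOInterp (α : Type) where
  c0 : α
  app : SkFun → α → α
  conc : Bool × ℕ → Set α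
  role : ℕ → Set (α × α)

def Term.eval {α : Type} (I : FOInterp α) (ρ : ℕ → α) : Term → α
  | .var x => ρ x
  | .sk0 => I.c0
  | .app f t => I.app f (t.eval I ρ)

def Atm.sat {α : Type} (I : FOInterp α) (ρ : ℕ → α) : Atm → Prop
  | .conc P t => t.eval I ρ ∈ I.conc P
  | .role r t u => (t.eval I ρ, u.eval I ρ) ∈ I.role r

def Lit.sat {α : Type} (I : FOInterp α) (ρ : ℕ → α) (l : Lit) : Prop :=
  if l.pos then l.atm.sat I ρ else ¬ l.atm.sat I ρ

/-- Satisfaction of a clause: the universal closure of the disjunction holds. -/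
def ClauseSat {α : Type} (I : FOInterp α) (c : Clause) : Prop :=
  ∀ ρ : ℕ → α, ∃ l ∈ c, l.sat I ρ

def CModels {α : Type} (I : FOInterp α) (Ψ : Set Clause) : Prop :=
  ∀ c ∈ Ψ, ClauseSat I c

def CEntails (Ψ : Set Clause) (c : Clause) : Prop :=
  ∀ (α : Type) (I : FOInterp α), CModels I Ψ → ClauseSat I c

def ClEntails (c d : Clause) : Prop := CEntails {c} d

def IsPrimeImplicate (Ψ : Set Clause) (c : Clause) : Prop :=
  CEntails Ψ c ∧ ∀ c' : Clause, CEntails Ψ c' → ClEntails c' c → ClEntails c c'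

def Term.vars : Term → Set ℕ
  | .var x => {x}
  | .sk0 => ∅
  | .app _ t => t.vars

def Atm.vars : Atm → Set ℕ
  | .conc _ t => t.vars
  | .role _ t u => t.vars ∪ u.vars

def ClauseVars (c : Clause) : Set ℕ := {x | ∃ l ∈ c, x ∈ l.atm.vars}

def ClauseGround (c : Clause) : Prop := ClauseVars c = ∅
def ClausePositive (c : Clause) : Prop := ∀ l ∈ c, l.pos = true
def ClauseNegative (c : Clause) : Prop := ∀ l ∈ c, l.pos = false

def Atm.inSig (S : Set ℕ) : Atm → Prop
  | .conc P _ => P.2 ∈ S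
  | .role _ _ _ => True

def ClauseInSig (S : Set ℕ) (c : Clause) : Prop := ∀ l ∈ c, l.atm.inSig S

/-- Positive ground prime implicates over `Σ ∪ N_R`. -/
def PIpos (S : Set ℕ) (Ψ : Set Clause) : Set Clause :=
  {c | IsPrimeImplicate Ψ c ∧ ClauseGround c ∧ ClausePositive c ∧ ClauseInSig S c}

/-- Negative ground prime implicates over `Σ ∪ N_R`. -/
def PIneg (S : Set ℕ) (Ψ : Set Clause) : Set Clause :=
  {c | IsPrimeImplicate Ψ c ∧ ClauseGround c ∧ ClauseNegative c ∧ ClauseInSig S c}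

/-- The ground atom `a` belongs (as a unit clause) to `PI^{g+}_Σ(Ψ)`. -/
def InPIpos (S : Set ℕ) (Ψ : Set Clause) (a : GAtm) : Prop :=
  ({⟨true, a.toAtm⟩} : Clause) ∈ PIpos S Ψ

/-! ### Substitutions and resolution -/

def Term.subst (σ : ℕ → Term) : Term → Term
  | .var x => σ x
  | .sk0 => .sk0
  | .app f t => .app f (t.subst σ)

def Atm.subst (σ : ℕ → Term) : Atm → Atm
  | .conc P t => .conc P (t.subst σ)
  | .role r t u => .role r (t.subst σ) (u.subst σ)

def Lit.subst (σ : ℕ → Term) (l : Lit) : Lit := ⟨l.pos, l.atm.subst σ⟩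

def ClauseSubst (σ : ℕ → Term) (c : Clause) : Clause := c.image (Lit.subst σ)

def IsUnifier (σ : ℕ → Term) (a b : Atm) : Prop := a.subst σ = b.subst σ

def IsMGU (σ : ℕ → Term) (a b : Atm) : Prop :=
  IsUnifier σ a b ∧ ∀ τ, IsUnifier τ a b → ∃ δ, ∀ x, (σ x).subst δ = τ x

/-- Resolution derivations from `Ψ`, where every resolvent must satisfy `ok`. -/
inductive Deriv (Ψ : Set Clause) (ok : Clause → Prop) : Clause → Prop
  | hyp {c : Clause} : c ∈ Ψ → Deriv Ψ ok c
  | res {c₁ c₂ : Clause} {a b : Atm} {σ : ℕ → Term} :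
      Deriv Ψ ok c₁ → Deriv Ψ ok c₂ →
      (⟨true, a⟩ : Lit) ∈ c₁ → (⟨false, b⟩ : Lit) ∈ c₂ → IsMGU σ a b →
      ok (ClauseSubst σ (c₁.erase ⟨true, a⟩ ∪ c₂.erase ⟨false, b⟩)) →
      Deriv Ψ ok (ClauseSubst σ (c₁.erase ⟨true, a⟩ ∪ c₂.erase ⟨false, b⟩))
  | factor {c : Clause} {l₁ l₂ : Lit} {σ : ℕ → Term} :
      Deriv Ψ ok c → l₁ ∈ c → l₂ ∈ c → l₁ ≠ l₂ → l₁.pos = l₂.pos →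
      IsMGU σ l₁.atm l₂.atm →
      ok (ClauseSubst σ (c.erase l₂)) →
      Deriv Ψ ok (ClauseSubst σ (c.erase l₂))

/-! ### The translation Φ of an abduction problem -/

def vx : Term := .var 0
def vy : Term := .var 1
def pcl (b : Bool) (A : ℕ) (t : Term) : Lit := ⟨true, .conc (b, A) t⟩
def ncl (b : Bool) (A : ℕ) (t : Term) : Lit := ⟨false, .conc (b, A) t⟩
def prl (r : ℕ) (t u : Term) : Lit := ⟨true, .role r t u⟩
def nrl (r : ℕ) (t u : Term) : Lit := ⟨false, .role r t u⟩

def clausesOf (b : Bool) (ci : CI) : Set Clause :=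
  match ci with
  | (.atom A, .atom B) => {({ncl b A vx, pcl b B vx} : Clause)}
  | (.conj (.atom A₁) (.atom A₂), .atom B) =>
      {({ncl b A₁ vx, ncl b A₂ vx, pcl b B vx} : Clause)}
  | (.ex r (.atom A), .atom B) =>
      {({nrl r vx vy, ncl b A vy, pcl b B vx} : Clause)}
  | (.atom A, .ex r (.atom B)) =>
      {({ncl b A vx, prl r vx (.app (b, (.atom A, .ex r (.atom B))) vx)} : Clause),
       ({ncl b A vx, pcl b B (.app (b, (.atom A, .ex r (.atom B))) vx)} : Clause)}
  | _ => ∅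

/-- The clausal translation `Φ` of the abduction problem `⟨T, Σ, C₁ ⊑ C₂⟩`. -/
def Translation (T : TBox) (C1 C2 : ℕ) : Set Clause :=
  (⋃ ci ∈ T, clausesOf false ci ∪ clausesOf true ci) ∪
  {({pcl false C1 .sk0} : Clause), ({ncl true C2 .sk0} : Clause)}

/-- The presaturation `Φ_p` of a clause set. -/
def presat (Ψ : Set Clause) : Set Clause :=
  Ψ ∪ {c | ∃ (b : Bool) (A B : ℕ),
        c = ({ncl b A vx, pcl b B vx} : Clause) ∧ CEntails Ψ c}

/-! ### Herbrand interpretations -/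

def herb (S : Set GAtm) : FOInterp GTerm where
  c0 := .sk0
  app := .app
  conc := fun P => {t | GAtm.conc P t ∈ S}
  role := fun r => {p | GAtm.role r p.1 p.2 ∈ S}

def HModels (S : Set GAtm) (Ψ : Set Clause) : Prop := CModels (herb S) Ψ

def piPosAtoms (S : Set ℕ) (Ψ : Set Clause) : Set GAtm := {a | InPIpos S Ψ a}

/-- EL semantics of a concept in a Herbrand interpretation (original predicates). -/
def gsem (I : Set GAtm) : ELConcept → Set GTerm
  | .top => Set.univ
  | .atom A => {t | GAtm.conc (false, A) t ∈ I}
  | .conj C D => gsem I C ∩ gsem I D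
  | .ex r C => {t | ∃ u, GAtm.role r t u ∈ I ∧ u ∈ gsem I C}

/-! ### Canonical models of description trees -/

/-- The canonical model `I^c(sl)` of a description tree with Skolem labeling `sl`. -/
def canonModel (t : DescTree) (sl : ℕ → GTerm) : Set GAtm :=
  {a | ∃ e ∈ t.E, a = GAtm.role e.2.1 (sl e.1) (sl e.2.2)} ∪
  {a | ∃ v ∈ t.V, ∃ A ∈ t.label v, a = GAtm.conc (false, A) (sl v)}

/-- The unary-predicate part `I^c_A(sl)` of the canonical model, as labelled pairs. -/
def canonA (t : DescTree) (sl : ℕ → GTerm) : Set (ℕ × GTerm) :=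
  {p | ∃ v ∈ t.V, p.1 ∈ t.label v ∧ p.2 = sl v}

/-- The clause `⋁_{v ∈ V₂, B ∈ l₂(v)} ¬B̄(sl v)`. -/
def negTreeClause (t : DescTree) (sl : ℕ → GTerm) : Clause :=
  t.V.biUnion (fun v =>
    (t.label v).image (fun B => (⟨false, Atm.conc (true, B) (sl v).toTerm⟩ : Lit)))

/-! ### Constructible hypotheses -/

def negClauseOf (B : Finset (ℕ × GTerm)) : Clause :=
  B.image (fun p => (⟨false, Atm.conc (true, p.1) p.2.toTerm⟩ : Lit))

def posUnit (p : ℕ × GTerm) : Clause := {⟨true, Atm.conc (false, p.1) p.2.toTerm⟩}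

/-- `C_{X,t} = ⊓{A | A(t) ∈ X}`. -/
noncomputable def CAt (X : Finset (ℕ × GTerm)) (t : GTerm) : ELConcept :=
  conjOf ((X.filter (fun p => p.2 = t)).image Prod.fst)

/-- `H` is the hypothesis constructed from the sets `A` and `B` of ground atoms. -/
def ConstructibleVia (S : Set ℕ) (Ψ : Set Clause)
    (A B : Finset (ℕ × GTerm)) (H : TBox) : Prop :=
  A.Nonempty ∧ B.Nonempty ∧
  negClauseOf B ∈ PIneg S Ψ ∧
  (∀ p ∈ B, ∃ a, InPIpos S Ψ (GAtm.conc (false, a) p.2)) ∧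
  ((↑A : Set (ℕ × GTerm)) =
    {q | InPIpos S Ψ (GAtm.conc (false, q.1) q.2) ∧ ∃ p ∈ B, p.2 = q.2}) ∧
  ((↑H : Set CI) =
    {ci | ∃ p ∈ B, ci = (CAt A p.2, CAt B p.2) ∧ ¬ PrecSq (CAt B p.2) (CAt A p.2)})

def Constructible (S : Set ℕ) (Ψ : Set Clause) (H : TBox) : Prop :=
  ∃ A B, ConstructibleVia S Ψ A B H

/-! ### Clause shapes I3–I7, signature counts -/

def isI3 (c : Clause) : Prop :=
  ∃ P Q : Bool × ℕ, c = ({⟨false, .conc P vx⟩, ⟨true, .conc Q vx⟩} : Clause)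

def isI4 (c : Clause) : Prop :=
  ∃ P₁ P₂ Q : Bool × ℕ,
    c = ({⟨false, .conc P₁ vx⟩, ⟨false, .conc P₂ vx⟩, ⟨true, .conc Q vx⟩} : Clause)

def isI5 (c : Clause) : Prop :=
  ∃ (r : ℕ) (P Q : Bool × ℕ),
    c = ({⟨false, .role r vx vy⟩, ⟨false, .conc P vy⟩, ⟨true, .conc Q vx⟩} : Clause)

def isI7 (c : Clause) : Prop :=
  ∃ (P Q : Bool × ℕ) (f : SkFun),
    c = ({⟨false, .conc P vx⟩, ⟨true, .conc Q (.app f vx)⟩} : Clause)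

/-- The atomic concept `A_sk` occurring positively in the I7-clause introducing `sk`
(as a predicate, with the copy flag of `sk`). -/
def skHeadPred (f : SkFun) : Bool × ℕ :=
  (f.1, match f.2.2 with
        | .ex _ (.atom B) => B
        | _ => 0)

def Term.funs : Term → Set SkFun
  | .var _ => ∅
  | .sk0 => ∅
  | .app f t => insert f t.funs

def Atm.funs : Atm → Set SkFun
  | .conc _ t => t.funs
  | .role _ t u => t.funs ∪ u.funs

def clauseFuns (c : Clause) : Set SkFun := {f | ∃ l ∈ c, f ∈ l.atm.funs}

def clauseConcs (c : Clause) : Set (Bool × ℕ) := {P | ∃ l ∈ c, ∃ t, l.atm = Atm.conc P t}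

/-- The number of atomic concepts occurring in a clause set. -/
noncomputable def numConcs (Ψ : Set Clause) : ℕ := Set.ncard {P | ∃ c ∈ Ψ, P ∈ clauseConcs c}

/-- The number of occurrences of existential role restrictions in a TBox. -/
def exOccs (T : TBox) : ℕ := T.sum (fun ci => ci.1.exCount + ci.2.exCount)

/-- The number of Skolem functions occurring in `Ψ` introduced for the original copy. -/
noncomputable def numOrigSk (Ψ : Set Clause) : ℕ :=
  Set.ncard {f : SkFun | f.1 = false ∧ ∃ c ∈ Ψ, f ∈ clauseFuns c}

def unitC (P : Bool × ℕ) (t : GTerm) : Clause := {⟨true, .conc P t.toTerm⟩}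
def negUnitC (P : Bool × ℕ) (t : GTerm) : Clause := {⟨false, .conc P t.toTerm⟩}

/-! ### Skolem trees and solution trees -/

structure SkolemTree where
  V : Finset ℕ
  root : ℕ
  E : Finset (ℕ × ℕ)
  s : ℕ → GTerm
  dep : ℕ → ℕ
  root_mem : root ∈ V
  s_root : s root = .sk0
  edge_mem : ∀ e ∈ E, e.1 ∈ V ∧ e.2 ∈ V
  edge_term : ∀ e ∈ E, s e.2 = s e.1 ∨ ∃ f, s e.2 = GTerm.app f (s e.1)
  parent_unique : ∀ e ∈ E, ∀ e' ∈ E, e.2 = e'.2 → e = e'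
  parent_exists : ∀ v ∈ V, v ≠ root → ∃ e ∈ E, e.2 = v
  dep_root : dep root = 0
  dep_edge : ∀ e ∈ E, dep e.2 = dep e.1 + 1

/-- `v` is an ancestor of `w` (every node is an ancestor of itself). -/
def SkolemTree.Ancestor (F : SkolemTree) (v w : ℕ) : Prop :=
  Relation.ReflTransGen (fun a b => (a, b) ∈ F.E) v w

/-- The descendants of `v` (the nodes of the subtree under `v`). -/
def SkolemTree.Desc (F : SkolemTree) (v : ℕ) : Set ℕ := {w | F.Ancestor v w}

/-- The positive labeling `l⁺`. -/
def posLab (Ψ : Set Clause) (F : SkolemTree) (v : ℕ) : Set ℕ :=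
  {A | InPIpos Set.univ Ψ (GAtm.conc (false, A) (F.s v))}

def SkolemTree.children (F : SkolemTree) (v : ℕ) : Finset ℕ :=
  (F.E.filter (fun e => e.1 = v)).image Prod.snd

def SkolemTree.leaves (F : SkolemTree) : Finset ℕ :=
  F.V.filter (fun v => F.E.filter (fun e => e.1 = v) = ∅)

/-- The unit role facts `{r(t, sk(t)) ∈ PI^{g+}}`. -/
def roleFacts (Ψ : Set Clause) : Set Clause :=
  {c | (∃ (r : ℕ) (t : GTerm) (f : SkFun),
        c = ({⟨true, Atm.role r t.toTerm (GTerm.app f t).toTerm⟩} : Clause)) ∧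
       c ∈ PIpos Set.univ Ψ}

def nonGroundOf (Ψ : Set Clause) : Set Clause := {c | c ∈ Ψ ∧ ¬ ClauseGround c}

/-- Negative labeling `l⁻` for a Skolem tree (labels are duplicate concept names,
recorded by their underlying name in `N_C`). -/
def IsNegLabeling (Ψ : Set Clause) (C2 : ℕ) (F : SkolemTree) (ln : ℕ → ℕ) : Prop :=
  ln F.root = C2 ∧
  ∀ v ∈ F.V, F.children v ≠ ∅ →
    Deriv ({negUnitC (true, ln v) (F.s v)} ∪ roleFacts Ψ ∪ nonGroundOf (presat Ψ))
      (fun _ => True)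
      ((F.children v).image
        (fun w => (⟨false, Atm.conc (true, ln w) (F.s w).toTerm⟩ : Lit)))

/-- The clause `φ_{F,l⁻}` determined by the leaves.  (Clauses are finite sets of
literals, so it is automatically considered up to repetition of literals.) -/
def leavesClause (F : SkolemTree) (ln : ℕ → ℕ) : Clause :=
  F.leaves.image (fun v => (⟨false, Atm.conc (true, ln v) (F.s v).toTerm⟩ : Lit))

def IsSolutionTree (Ψ : Set Clause) (C2 : ℕ) (F : SkolemTree) (ln : ℕ → ℕ) : Prop :=
  (∀ v ∈ F.V, (posLab Ψ F v).Nonempty) ∧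
  IsNegLabeling Ψ C2 F ln ∧
  leavesClause F ln ∈ PIneg Set.univ Ψ ∧
  ∃ (A B : Finset (ℕ × GTerm)) (H : TBox),
    ConstructibleVia Set.univ Ψ A B H ∧
    (↑B : Set (ℕ × GTerm)) = {p | ∃ v ∈ F.leaves, p = (ln v, F.s v)}

/-- The solution `{⊓l⁺(v) ⊑ l⁻(v) | v a leaf}` of a solution tree. -/
def treeSol (Ψ : Set Clause) (F : SkolemTree) (ln : ℕ → ℕ) : Set CI :=
  {ci | ∃ v ∈ F.leaves, ∃ s : Finset ℕ, (↑s : Set ℕ) = posLab Ψ F v ∧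
        ci = (conjOf s, ELConcept.atom (ln v))}

/-- Minimality: no solution tree with strictly fewer nodes has a solution
included in the solution of this one. -/
def MinimalSolutionTree (Ψ : Set Clause) (C2 : ℕ) (F : SkolemTree) (ln : ℕ → ℕ) : Prop :=
  IsSolutionTree Ψ C2 F ln ∧
  ∀ (F' : SkolemTree) (ln' : ℕ → ℕ),
    IsSolutionTree Ψ C2 F' ln' →
    treeSol Ψ F' ln' ⊆ treeSol Ψ F ln →
    F.V.card ≤ F'.V.card

/-- Replace the (unique) occurrence of `old` as a suffix of a ground term by `new`. -/
def GTerm.replaceSuffix (old new : GTerm) : GTerm → GTerm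
  | .sk0 => if GTerm.sk0 = old then new else .sk0
  | .app f u => if GTerm.app f u = old then new else .app f (GTerm.replaceSuffix old new u)


section Aux
open ELConcept

/-! ### Ground term utilities -/

def gval {α : Type} (I : FOInterp α) : GTerm → α
  | .sk0 => I.c0
  | .app f t => I.app f (gval I t)

def GTerm.gfuns : GTerm → Set SkFun
  | .sk0 => ∅
  | .app f t => insert f t.gfuns

lemma toTerm_vars (g : GTerm) : (g.toTerm).vars = ∅ := by
  induction g with
  | sk0 => rfl
  | app f t ih => simpa [GTerm.toTerm, Term.vars] using ih

lemma subst_ground (σ : ℕ → Term) {t : Term} (h : t.vars = ∅) : t.subst σ = t := by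
  induction t with
  | var x => exact absurd h (by simp [Term.vars])
  | sk0 => rfl
  | app f t ih => simp only [Term.subst]; rw [ih h]

lemma eval_toTerm {α : Type} (I : FOInterp α) (ρ : ℕ → α) (g : GTerm) :
    (g.toTerm).eval I ρ = gval I g := by
  induction g with
  | sk0 => rfl
  | app f t ih => simp [GTerm.toTerm, Term.eval, gval, ih]

lemma gval_std {I : FOInterp GTerm} (h0 : I.c0 = .sk0) (hA : I.app = GTerm.app)
    (g : GTerm) : gval I g = g := by
  induction g with
  | sk0 => simpa [gval]
  | app f t ih => simp [gval, hA, ih]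

lemma ground_exists_gterm {t : Term} (h : t.vars = ∅) : ∃ g : GTerm, t = g.toTerm := by
  induction t with
  | var x => exact absurd h (by simp [Term.vars])
  | sk0 => exact ⟨.sk0, rfl⟩
  | app f t ih =>
      obtain ⟨g, hg⟩ := ih (by simpa [Term.vars] using h)
      exact ⟨.app f g, by simp [GTerm.toTerm, hg]⟩

lemma toTerm_inj : Function.Injective GTerm.toTerm := by
  intro a b h
  induction a generalizing b with
  | sk0 => cases b <;> simp_all [GTerm.toTerm]
  | app f t ih =>
      cases b with
      | sk0 => simp [GTerm.toTerm] at h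
      | app f' t' =>
          simp only [GTerm.toTerm, Term.app.injEq] at h
          rw [h.1, ih h.2]

lemma sub_gfuns {f : SkFun} {w g : GTerm} (h : GTerm.Subterm (.app f w) g) :
    f ∈ g.gfuns := by
  induction h with
  | refl => simp [GTerm.gfuns]
  | app f' _ ih => simp [GTerm.gfuns]; right; exact ih

lemma var_eval_subterm {S : Set GAtm} (ρ : ℕ → GTerm) {t : Term} {x : ℕ} (hx : x ∈ t.vars) :
    GTerm.Subterm (ρ x) (t.eval (herb S) ρ) := by
  induction t with
  | var y => simp [Term.vars] at hx; subst hx; exact .refl _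
  | sk0 => simp [Term.vars] at hx
  | app f t ih =>
      simp [Term.vars] at hx
      exact .app f (ih hx)

/-! ### The minimal Herbrand model -/

inductive Mem (T : TBox) (C1 : ℕ) : GAtm → Prop
  | base : Mem T C1 (.conc (false, C1) .sk0)
  | r1 {A B : ℕ} {t : GTerm} : ((ELConcept.atom A, ELConcept.atom B) : CI) ∈ T →
      Mem T C1 (.conc (false, A) t) → Mem T C1 (.conc (false, B) t)
  | r2 {A₁ A₂ B : ℕ} {t : GTerm} :
      ((ELConcept.conj (.atom A₁) (.atom A₂), ELConcept.atom B) : CI) ∈ T →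
      Mem T C1 (.conc (false, A₁) t) → Mem T C1 (.conc (false, A₂) t) →
      Mem T C1 (.conc (false, B) t)
  | r3 {r A B : ℕ} {t u : GTerm} : ((ELConcept.ex r (.atom A), ELConcept.atom B) : CI) ∈ T →
      Mem T C1 (.role r t u) → Mem T C1 (.conc (false, A) u) → Mem T C1 (.conc (false, B) t)
  | r4a {A r B : ℕ} {t : GTerm} : ((ELConcept.atom A, ELConcept.ex r (.atom B)) : CI) ∈ T →
      Mem T C1 (.conc (false, A) t) →
      Mem T C1 (.role r t (.app (false, (ELConcept.atom A, ELConcept.ex r (.atom B))) t))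
  | r4b {A r B : ℕ} {t : GTerm} : ((ELConcept.atom A, ELConcept.ex r (.atom B)) : CI) ∈ T →
      Mem T C1 (.conc (false, A) t) →
      Mem T C1 (.conc (false, B) (.app (false, (ELConcept.atom A, ELConcept.ex r (.atom B))) t))

inductive Gen (T : TBox) (C1 : ℕ) : GTerm → Prop
  | sk0 : Gen T C1 .sk0
  | app {A r B : ℕ} {t : GTerm} : ((ELConcept.atom A, ELConcept.ex r (.atom B)) : CI) ∈ T →
      Mem T C1 (.conc (false, A) t) → Gen T C1 t →
      Gen T C1 (.app (false, (ELConcept.atom A, ELConcept.ex r (.atom B))) t)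

/-- The head name of a ground term. -/
def headName (C1 : ℕ) : GTerm → ℕ
  | .sk0 => C1
  | .app f _ => (skHeadPred f).2

variable {T : TBox} {C1 C2 : ℕ}

lemma mem_false {a : GAtm} (h : Mem T C1 a) :
    ∀ P t, a = .conc P t → P.1 = false := by
  induction h <;> intro P t h <;> first | (cases h; rfl) | cases h

def gatmFuns : GAtm → Set SkFun
  | .conc _ t => t.gfuns
  | .role _ t u => t.gfuns ∪ u.gfuns

lemma mem_gfuns_false {a : GAtm} (h : Mem T C1 a) :
    ∀ f ∈ gatmFuns a, f.1 = false := by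
  induction h with
  | base => intro f hf; simp [gatmFuns, GTerm.gfuns] at hf
  | r1 _ _ ih => exact ih
  | r2 _ _ _ ih₁ _ => exact ih₁
  | r3 _ _ _ ihrole _ => intro f hf; exact ihrole f (Or.inl hf)
  | r4a _ _ ih =>
      intro f hf
      rcases hf with hf | hf
      · exact ih f hf
      · rcases hf with rfl | hf
        · rfl
        · exact ih f hf
  | r4b _ _ ih =>
      intro f hf
      rcases hf with rfl | hf
      · rfl
      · exact ih f hf

def gatmTerms : GAtm → Set GTerm
  | .conc _ t => {t}
  | .role _ t u => {t, u}

lemma gen_of_mem {a : GAtm} (h : Mem T C1 a) :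
    ∀ t ∈ gatmTerms a, Gen T C1 t := by
  induction h with
  | base => intro t ht; rcases ht with rfl; exact .sk0
  | r1 _ _ ih => exact ih
  | r2 _ _ _ ih₁ _ => exact ih₁
  | r3 _ _ _ ihrole _ =>
      intro t ht; rcases ht with rfl
      exact ihrole t (Or.inl rfl)
  | r4a hci hm ih =>
      intro t ht
      rcases ht with rfl | ht
      · exact ih t rfl
      · rcases ht with rfl
        exact .app hci hm (ih _ rfl)
  | r4b hci hm ih =>
      intro t ht; rcases ht with rfl
      exact .app hci hm (ih _ rfl)

lemma gen_subterm {u w : GTerm} (hg : Gen T C1 u) (hs : GTerm.Subterm w u) :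
    Gen T C1 w := by
  induction hs with
  | refl => exact hg
  | app f hsub ih =>
      cases hg with
      | app hci hm hgt => exact ih hgt

/-! ### Soundness of `Mem` -/

def GAtmSat {α : Type} (I : FOInterp α) : GAtm → Prop
  | .conc P t => gval I t ∈ I.conc P
  | .role r t u => (gval I t, gval I u) ∈ I.role r

lemma clause_mem_trans {ci : CI} (hci : ci ∈ T) {b : Bool} {c : Clause}
    (hc : c ∈ clausesOf b ci) : c ∈ Translation T C1 C2 := by
  apply Set.mem_union_left
  apply Set.mem_biUnion hci
  cases b
  · exact Or.inl hc
  · exact Or.inr hc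

lemma unit_c1_mem : ({pcl false C1 .sk0} : Clause) ∈ Translation T C1 C2 :=
  Set.mem_union_right _ (Or.inl rfl)

lemma sound {a : GAtm} (h : Mem T C1 a) {α : Type} (I : FOInterp α)
    (hI : CModels I (Translation T C1 C2)) : GAtmSat I a := by
  induction h with
  | base =>
      have := hI _ unit_c1_mem (fun _ => I.c0)
      rcases this with ⟨l, hl, hsat⟩
      simp only [Finset.mem_singleton] at hl
      subst hl
      simpa [GAtmSat, gval, Lit.sat, Atm.sat, Term.eval, pcl] using hsat
  | r1 hci hm ih =>
      rename_i A B t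
      have hc : ({ncl false A vx, pcl false B vx} : Clause) ∈ Translation T C1 C2 :=
        clause_mem_trans (b := false) hci (by simp [clausesOf])
      rcases hI _ hc (fun _ => gval I t) with ⟨l, hl, hsat⟩
      simp only [Finset.mem_insert, Finset.mem_singleton] at hl
      rcases hl with rfl | rfl
      · exact absurd ih (by simpa [Lit.sat, Atm.sat, Term.eval, ncl, vx, GAtmSat] using hsat)
      · simpa [Lit.sat, Atm.sat, Term.eval, pcl, vx, GAtmSat] using hsat
  | r2 hci hm₁ hm₂ ih₁ ih₂ =>
      rename_i A₁ A₂ B t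
      have hc : ({ncl false A₁ vx, ncl false A₂ vx, pcl false B vx} : Clause) ∈
          Translation T C1 C2 := clause_mem_trans (b := false) hci (by simp [clausesOf])
      rcases hI _ hc (fun _ => gval I t) with ⟨l, hl, hsat⟩
      simp only [Finset.mem_insert, Finset.mem_singleton] at hl
      rcases hl with rfl | rfl | rfl
      · exact absurd ih₁ (by simpa [Lit.sat, Atm.sat, Term.eval, ncl, vx, GAtmSat] using hsat)
      · exact absurd ih₂ (by simpa [Lit.sat, Atm.sat, Term.eval, ncl, vx, GAtmSat] using hsat)
      · simpa [Lit.sat, Atm.sat, Term.eval, pcl, vx, GAtmSat] using hsat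
  | r3 hci hmr hmc ihr ihc =>
      rename_i r A B t u
      have hc : ({nrl r vx vy, ncl false A vy, pcl false B vx} : Clause) ∈
          Translation T C1 C2 := clause_mem_trans (b := false) hci (by simp [clausesOf])
      rcases hI _ hc (fun n => if n = 0 then gval I t else gval I u) with ⟨l, hl, hsat⟩
      simp only [Finset.mem_insert, Finset.mem_singleton] at hl
      rcases hl with rfl | rfl | rfl
      · exact absurd ihr (by simpa [Lit.sat, Atm.sat, Term.eval, nrl, vx, vy, GAtmSat] using hsat)
      · exact absurd ihc (by simpa [Lit.sat, Atm.sat, Term.eval, ncl, vx, vy, GAtmSat] using hsat)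
      · simpa [Lit.sat, Atm.sat, Term.eval, pcl, vx, GAtmSat] using hsat
  | r4a hci hm ih =>
      rename_i A r B t
      have hc : ({ncl false A vx,
          prl r vx (.app (false, (ELConcept.atom A, ELConcept.ex r (.atom B))) vx)} : Clause) ∈
          Translation T C1 C2 := clause_mem_trans (b := false) hci (by simp [clausesOf])
      rcases hI _ hc (fun _ => gval I t) with ⟨l, hl, hsat⟩
      simp only [Finset.mem_insert, Finset.mem_singleton] at hl
      rcases hl with rfl | rfl
      · exact absurd ih (by simpa [Lit.sat, Atm.sat, Term.eval, ncl, vx, GAtmSat] using hsat)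
      · simpa [Lit.sat, Atm.sat, Term.eval, prl, vx, GAtmSat, gval] using hsat
  | r4b hci hm ih =>
      rename_i A r B t
      have hc : ({ncl false A vx,
          pcl false B (.app (false, (ELConcept.atom A, ELConcept.ex r (.atom B))) vx)} : Clause) ∈
          Translation T C1 C2 := clause_mem_trans (b := false) hci (by simp [clausesOf])
      rcases hI _ hc (fun _ => gval I t) with ⟨l, hl, hsat⟩
      simp only [Finset.mem_insert, Finset.mem_singleton] at hl
      rcases hl with rfl | rfl
      · exact absurd ih (by simpa [Lit.sat, Atm.sat, Term.eval, ncl, vx, GAtmSat] using hsat)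
      · simpa [Lit.sat, Atm.sat, Term.eval, pcl, vx, GAtmSat, gval] using hsat

lemma mem_centails {a : GAtm} (h : Mem T C1 a) :
    CEntails (Translation T C1 C2) {⟨true, a.toAtm⟩} := by
  intro α I hI ρ
  refine ⟨_, Finset.mem_singleton_self _, ?_⟩
  have hs := sound (C2 := C2) h I hI
  cases a with
  | conc P t => simpa [Lit.sat, Atm.sat, GAtm.toAtm, eval_toTerm, GAtmSat] using hs
  | role r t u => simpa [Lit.sat, Atm.sat, GAtm.toAtm, eval_toTerm, GAtmSat] using hs

/-! ### The Herbrand model of `Mem` models the translation -/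

lemma herb_models (hNF : NormalForm T) :
    CModels (herb {a | Mem T C1 a}) (Translation T C1 C2) := by
  classical
  intro c hc
  rcases hc with hc | hc
  swap
  · rcases hc with rfl | rfl
    · intro ρ
      refine ⟨pcl false C1 .sk0, by simp, ?_⟩
      simpa [Lit.sat, Atm.sat, Term.eval, pcl, herb] using Mem.base
    · intro ρ
      refine ⟨ncl true C2 .sk0, by simp, ?_⟩
      simp only [Lit.sat, Atm.sat, Term.eval, ncl, herb, Set.mem_setOf_eq]
      intro hmem
      exact absurd (mem_false hmem _ _ rfl) (by simp)
  · simp only [Set.mem_iUnion] at hc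
    obtain ⟨ci, hciT, hc⟩ := hc
    have hb : ∃ b : Bool, c ∈ clausesOf b ci := by
      rcases hc with hc | hc
      exacts [⟨false, hc⟩, ⟨true, hc⟩]
    clear hc
    obtain ⟨b, hc⟩ := hb
    rcases hNF ci hciT with ⟨A, B, rfl⟩ | ⟨A₁, A₂, B, rfl⟩ | ⟨r, A, B, rfl⟩ | ⟨A, r, B, rfl⟩ <;>
      simp only [clausesOf, Set.mem_singleton_iff, Set.mem_insert_iff] at hc
    · subst hc
      intro ρ
      cases b with
      | false =>
          by_cases h : Mem T C1 (.conc (false, A) (ρ 0))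
          · exact ⟨pcl false B vx, by simp, by
              simpa [Lit.sat, Atm.sat, Term.eval, pcl, vx, herb] using Mem.r1 hciT h⟩
          · exact ⟨ncl false A vx, by simp, by
              simpa [Lit.sat, Atm.sat, Term.eval, ncl, vx, herb] using h⟩
      | true =>
          refine ⟨ncl true A vx, by simp, ?_⟩
          simp only [Lit.sat, Atm.sat, Term.eval, ncl, vx, herb, Set.mem_setOf_eq]
          intro hmem
          exact absurd (mem_false hmem _ _ rfl) (by simp)
    · subst hc
      intro ρ
      cases b with
      | false =>
          by_cases h₁ : Mem T C1 (.conc (false, A₁) (ρ 0))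
          · by_cases h₂ : Mem T C1 (.conc (false, A₂) (ρ 0))
            · exact ⟨pcl false B vx, by simp, by
                simpa [Lit.sat, Atm.sat, Term.eval, pcl, vx, herb] using Mem.r2 hciT h₁ h₂⟩
            · exact ⟨ncl false A₂ vx, by simp, by
                simpa [Lit.sat, Atm.sat, Term.eval, ncl, vx, herb] using h₂⟩
          · exact ⟨ncl false A₁ vx, by simp, by
              simpa [Lit.sat, Atm.sat, Term.eval, ncl, vx, herb] using h₁⟩
      | true =>
          refine ⟨ncl true A₁ vx, by simp, ?_⟩
          simp only [Lit.sat, Atm.sat, Term.eval, ncl, vx, herb, Set.mem_setOf_eq]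
          intro hmem
          exact absurd (mem_false hmem _ _ rfl) (by simp)
    · subst hc
      intro ρ
      cases b with
      | false =>
          by_cases hr : Mem T C1 (.role r (ρ 0) (ρ 1))
          · by_cases hA : Mem T C1 (.conc (false, A) (ρ 1))
            · exact ⟨pcl false B vx, by simp, by
                simpa [Lit.sat, Atm.sat, Term.eval, pcl, vx, herb] using Mem.r3 hciT hr hA⟩
            · exact ⟨ncl false A vy, by simp, by
                simpa [Lit.sat, Atm.sat, Term.eval, ncl, vy, herb] using hA⟩
          · exact ⟨nrl r vx vy, by simp, by
              simpa [Lit.sat, Atm.sat, Term.eval, nrl, vx, vy, herb] using hr⟩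
      | true =>
          refine ⟨ncl true A vy, by simp, ?_⟩
          simp only [Lit.sat, Atm.sat, Term.eval, ncl, vy, herb, Set.mem_setOf_eq]
          intro hmem
          exact absurd (mem_false hmem _ _ rfl) (by simp)
    · rcases hc with rfl | rfl
      · intro ρ
        cases b with
        | false =>
            by_cases h : Mem T C1 (.conc (false, A) (ρ 0))
            · refine ⟨prl r vx (.app (false, (ELConcept.atom A, ELConcept.ex r (.atom B))) vx),
                by simp, ?_⟩
              simpa [Lit.sat, Atm.sat, Term.eval, prl, vx, herb] using Mem.r4a hciT h
            · exact ⟨ncl false A vx, by simp, by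
                simpa [Lit.sat, Atm.sat, Term.eval, ncl, vx, herb] using h⟩
        | true =>
            refine ⟨ncl true A vx, by simp, ?_⟩
            simp only [Lit.sat, Atm.sat, Term.eval, ncl, vx, herb, Set.mem_setOf_eq]
            intro hmem
            exact absurd (mem_false hmem _ _ rfl) (by simp)
      · intro ρ
        cases b with
        | false =>
            by_cases h : Mem T C1 (.conc (false, A) (ρ 0))
            · refine ⟨pcl false B (.app (false, (ELConcept.atom A, ELConcept.ex r (.atom B))) vx),
                by simp, ?_⟩
              simpa [Lit.sat, Atm.sat, Term.eval, pcl, vx, herb] using Mem.r4b hciT h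
            · exact ⟨ncl false A vx, by simp, by
                simpa [Lit.sat, Atm.sat, Term.eval, ncl, vx, herb] using h⟩
        | true =>
            refine ⟨ncl true A vx, by simp, ?_⟩
            simp only [Lit.sat, Atm.sat, Term.eval, ncl, vx, herb, Set.mem_setOf_eq]
            intro hmem
            exact absurd (mem_false hmem _ _ rfl) (by simp)

lemma gval_herb (S : Set GAtm) (g : GTerm) : gval (herb S) g = g :=
  gval_std rfl rfl g

lemma mem_of_centails (hNF : NormalForm T) {P : Bool × ℕ} {g : GTerm}
    (h : CEntails (Translation T C1 C2) {⟨true, .conc P g.toTerm⟩}) :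
    Mem T C1 (.conc P g) := by
  rcases h _ _ (herb_models (C2 := C2) hNF) (fun _ => GTerm.sk0) with ⟨l, hl, hsat⟩
  simp only [Finset.mem_singleton] at hl
  subst hl
  simp only [Lit.sat, Atm.sat, eval_toTerm, gval_herb, if_true] at hsat
  exact hsat

/-! ### Primality of ground unit implicates -/

def mkStd (cc : Bool × ℕ → Set GTerm) (rr : ℕ → Set (GTerm × GTerm)) : FOInterp GTerm :=
  ⟨.sk0, GTerm.app, cc, rr⟩

@[simp] lemma mkStd_c0 (cc rr) : (mkStd cc rr).c0 = .sk0 := rfl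
@[simp] lemma mkStd_app (cc rr) : (mkStd cc rr).app = GTerm.app := rfl
@[simp] lemma mkStd_conc (cc rr) : (mkStd cc rr).conc = cc := rfl
@[simp] lemma mkStd_role (cc rr) : (mkStd cc rr).role = rr := rfl
@[simp] lemma gval_mkStd (cc rr) (g : GTerm) : gval (mkStd cc rr) g = g :=
  gval_std rfl rfl g

lemma clausesat_of_lit {c' : Clause} {l : Lit} (hl : l ∈ c') {I : FOInterp GTerm}
    (h : ∀ ρ, l.sat I ρ) : CModels I {c'} := by
  intro c hc
  rcases hc with rfl
  exact fun ρ => ⟨l, hl, h ρ⟩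

lemma implicate_lits {c' : Clause} {P : Bool × ℕ} {g : GTerm}
    (h : ClEntails c' {⟨true, .conc P g.toTerm⟩}) :
    ∀ l ∈ c', l.pos = true ∧ ∃ t, l.atm = .conc P t ∧ (t.vars = ∅ → t = g.toTerm) := by
  classical
  intro l hl
  obtain ⟨pos, atm⟩ := l
  have hunit : ∀ (I : FOInterp GTerm), CModels I {c'} → gval I g ∈ I.conc P := by
    intro I hI
    rcases h _ I hI (fun _ => GTerm.sk0) with ⟨l', hl', hsat⟩
    simp only [Finset.mem_singleton] at hl'
    subst hl'
    simpa [Lit.sat, Atm.sat, eval_toTerm] using hsat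
  cases pos with
  | false =>
      exfalso
      have hsat : ∀ ρ, Lit.sat (mkStd (fun _ => ∅) (fun _ => ∅)) ρ ⟨false, atm⟩ := by
        intro ρ
        cases atm <;> simp [Lit.sat, Atm.sat]
      have := hunit _ (clausesat_of_lit hl hsat)
      simpa using this
  | true =>
      refine ⟨rfl, ?_⟩
      cases atm with
      | role r t u =>
          exfalso
          have hsat : ∀ ρ, Lit.sat (mkStd (fun _ => ∅) (fun _ => Set.univ)) ρ
              ⟨true, .role r t u⟩ := by
            intro ρ; simp [Lit.sat, Atm.sat]
          have := hunit _ (clausesat_of_lit hl hsat)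
          simpa using this
      | conc Q t =>
          by_cases hQ : Q = P
          · subst hQ
            refine ⟨t, rfl, ?_⟩
            intro hgr
            by_contra hne
            obtain ⟨g', rfl⟩ := ground_exists_gterm hgr
            have hgg : g' ≠ g := fun hh => hne (by rw [hh])
            have hsat : ∀ ρ, Lit.sat
                (mkStd (fun R => if R = Q then {h | h ≠ g} else ∅) (fun _ => ∅)) ρ
                ⟨true, .conc Q g'.toTerm⟩ := by
              intro ρ
              simp [Lit.sat, Atm.sat, eval_toTerm, hgg]
            have := hunit _ (clausesat_of_lit hl hsat)
            simp at this
          · exfalso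
            have hsat : ∀ ρ, Lit.sat
                (mkStd (fun R => if R = Q then Set.univ else ∅) (fun _ => ∅)) ρ
                ⟨true, .conc Q t⟩ := by
              intro ρ; simp [Lit.sat, Atm.sat]
            have := hunit _ (clausesat_of_lit hl hsat)
            have hPQ : ¬ (P = Q) := fun hh => hQ hh.symm
            simpa [hPQ] using this

lemma mem_prime (hNF : NormalForm T) {P : Bool × ℕ} {g : GTerm}
    (hm : Mem T C1 (.conc P g)) :
    InPIpos Set.univ (Translation T C1 C2) (GAtm.conc P g) := by
  classical
  refine ⟨⟨mem_centails hm, ?_⟩, ?_, ?_, ?_⟩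
  · intro c' hΦc' hent
    have hlits := implicate_lits (P := P) (g := g) hent
    have hmemlit : (⟨true, .conc P g.toTerm⟩ : Lit) ∈ c' := by
      set z : GTerm := .app (true, (ELConcept.top, ELConcept.top)) .sk0 with hz
      rcases hΦc' _ _ (herb_models (C2 := C2) hNF) (fun _ => z) with ⟨l, hl, hsat⟩
      obtain ⟨hpos, t, hatm, hgr⟩ := hlits l hl
      obtain ⟨pos, atm⟩ := l
      cases hpos
      subst hatm
      simp only [Lit.sat, Atm.sat, if_true] at hsat
      have hmem : Mem T C1 (.conc P (t.eval (herb {a | Mem T C1 a}) (fun _ => z))) := hsat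
      by_cases hv : t.vars = ∅
      · rw [hgr hv] at hl
        exact hl
      · exfalso
        obtain ⟨x, hx⟩ := Set.nonempty_iff_ne_empty.mpr hv
        have hsub := var_eval_subterm (S := {a | Mem T C1 a}) (fun _ => z) hx
        have hfn : ((true, (ELConcept.top, ELConcept.top)) : SkFun) ∈
            (t.eval (herb {a | Mem T C1 a}) (fun _ => z)).gfuns := sub_gfuns hsub
        have := mem_gfuns_false hmem _ hfn
        simp at this
    intro α I hI ρ
    have hu := hI _ rfl (fun _ => I.c0)
    rcases hu with ⟨l', hl', hsat'⟩
    simp only [Finset.mem_singleton] at hl'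
    subst hl'
    refine ⟨_, hmemlit, ?_⟩
    simp only [Lit.sat, Atm.sat, GAtm.toAtm, if_true, eval_toTerm] at hsat' ⊢
    exact hsat'
  · show ClauseVars _ = ∅
    ext x
    simp [ClauseVars, Atm.vars, GAtm.toAtm, toTerm_vars]
  · intro l hl
    simp only [Finset.mem_singleton] at hl
    subst hl
    rfl
  · intro l hl
    simp only [Finset.mem_singleton] at hl
    subst hl
    trivial

/-! ### Model-step lemmas -/

section ModelSteps

variable {α : Type} {I : FOInterp α}

lemma model_step1 (hI : CModels I (Translation T C1 C2)) {A B : ℕ} (hci : ((ELConcept.atom A, ELConcept.atom B) : CI) ∈ T) {d : α}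
    (hd : d ∈ I.conc (false, A)) : d ∈ I.conc (false, B) := by
  have hcl : ({ncl false A vx, pcl false B vx} : Clause) ∈ Translation T C1 C2 :=
    clause_mem_trans (b := false) hci (by simp [clausesOf])
  rcases hI _ hcl (fun _ => d) with ⟨l, hl, hsat⟩
  simp only [Finset.mem_insert, Finset.mem_singleton] at hl
  rcases hl with rfl | rfl
  · exact absurd hd (by simpa [Lit.sat, Atm.sat, Term.eval, ncl, vx] using hsat)
  · simpa [Lit.sat, Atm.sat, Term.eval, pcl, vx] using hsat

lemma model_step2 (hI : CModels I (Translation T C1 C2)) {A₁ A₂ B : ℕ}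
    (hci : ((ELConcept.conj (.atom A₁) (.atom A₂), ELConcept.atom B) : CI) ∈ T) {d : α}
    (hd₁ : d ∈ I.conc (false, A₁)) (hd₂ : d ∈ I.conc (false, A₂)) :
    d ∈ I.conc (false, B) := by
  have hcl : ({ncl false A₁ vx, ncl false A₂ vx, pcl false B vx} : Clause) ∈
      Translation T C1 C2 := clause_mem_trans (b := false) hci (by simp [clausesOf])
  rcases hI _ hcl (fun _ => d) with ⟨l, hl, hsat⟩
  simp only [Finset.mem_insert, Finset.mem_singleton] at hl
  rcases hl with rfl | rfl | rfl
  · exact absurd hd₁ (by simpa [Lit.sat, Atm.sat, Term.eval, ncl, vx] using hsat)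
  · exact absurd hd₂ (by simpa [Lit.sat, Atm.sat, Term.eval, ncl, vx] using hsat)
  · simpa [Lit.sat, Atm.sat, Term.eval, pcl, vx] using hsat

lemma model_step5 (hI : CModels I (Translation T C1 C2)) {r A B : ℕ}
    (hci : ((ELConcept.ex r (.atom A), ELConcept.atom B) : CI) ∈ T) {d e : α}
    (hr : (d, e) ∈ I.role r) (he : e ∈ I.conc (false, A)) : d ∈ I.conc (false, B) := by
  have hcl : ({nrl r vx vy, ncl false A vy, pcl false B vx} : Clause) ∈
      Translation T C1 C2 := clause_mem_trans (b := false) hci (by simp [clausesOf])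
  rcases hI _ hcl (fun n => if n = 0 then d else e) with ⟨l, hl, hsat⟩
  simp only [Finset.mem_insert, Finset.mem_singleton] at hl
  rcases hl with rfl | rfl | rfl
  · exact absurd hr (by simpa [Lit.sat, Atm.sat, Term.eval, nrl, vx, vy] using hsat)
  · exact absurd he (by simpa [Lit.sat, Atm.sat, Term.eval, ncl, vy] using hsat)
  · simpa [Lit.sat, Atm.sat, Term.eval, pcl, vx] using hsat

lemma model_step6 (hI : CModels I (Translation T C1 C2)) {A r B : ℕ}
    (hci : ((ELConcept.atom A, ELConcept.ex r (.atom B)) : CI) ∈ T) {d : α}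
    (hd : d ∈ I.conc (false, A)) :
    (d, I.app (false, (ELConcept.atom A, ELConcept.ex r (.atom B))) d) ∈ I.role r := by
  have hcl : ({ncl false A vx,
      prl r vx (.app (false, (ELConcept.atom A, ELConcept.ex r (.atom B))) vx)} : Clause) ∈
      Translation T C1 C2 := clause_mem_trans (b := false) hci (by simp [clausesOf])
  rcases hI _ hcl (fun _ => d) with ⟨l, hl, hsat⟩
  simp only [Finset.mem_insert, Finset.mem_singleton] at hl
  rcases hl with rfl | rfl
  · exact absurd hd (by simpa [Lit.sat, Atm.sat, Term.eval, ncl, vx] using hsat)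
  · simpa [Lit.sat, Atm.sat, Term.eval, prl, vx] using hsat

lemma model_step7 (hI : CModels I (Translation T C1 C2)) {A r B : ℕ}
    (hci : ((ELConcept.atom A, ELConcept.ex r (.atom B)) : CI) ∈ T) {d : α}
    (hd : d ∈ I.conc (false, A)) :
    I.app (false, (ELConcept.atom A, ELConcept.ex r (.atom B))) d ∈ I.conc (false, B) := by
  have hcl : ({ncl false A vx,
      pcl false B (.app (false, (ELConcept.atom A, ELConcept.ex r (.atom B))) vx)} : Clause) ∈
      Translation T C1 C2 := clause_mem_trans (b := false) hci (by simp [clausesOf])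
  rcases hI _ hcl (fun _ => d) with ⟨l, hl, hsat⟩
  simp only [Finset.mem_insert, Finset.mem_singleton] at hl
  rcases hl with rfl | rfl
  · exact absurd hd (by simpa [Lit.sat, Atm.sat, Term.eval, ncl, vx] using hsat)
  · simpa [Lit.sat, Atm.sat, Term.eval, pcl, vx] using hsat

end ModelSteps

/-! ### Binary clause entailment helpers -/

lemma centails_bin {H A : ℕ}
    (h : ∀ (α : Type) (I : FOInterp α), CModels I (Translation T C1 C2) →
      ∀ d, d ∈ I.conc (false, H) → d ∈ I.conc (false, A)) :
    CEntails (Translation T C1 C2) {ncl false H vx, pcl false A vx} := by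
  classical
  intro α I hI ρ
  by_cases hd : ρ 0 ∈ I.conc (false, H)
  · exact ⟨pcl false A vx, by simp, by
      simpa [Lit.sat, Atm.sat, Term.eval, pcl, vx] using h _ I hI _ hd⟩
  · exact ⟨ncl false H vx, by simp, by
      simpa [Lit.sat, Atm.sat, Term.eval, ncl, vx] using hd⟩

lemma centails_bin_elim {H A : ℕ}
    (h : CEntails (Translation T C1 C2) {ncl false H vx, pcl false A vx})
    {α : Type} {I : FOInterp α} (hI : CModels I (Translation T C1 C2)) {d : α}
    (hd : d ∈ I.conc (false, H)) : d ∈ I.conc (false, A) := by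
  rcases h α I hI (fun _ => d) with ⟨l, hl, hsat⟩
  simp only [Finset.mem_insert, Finset.mem_singleton] at hl
  rcases hl with rfl | rfl
  · exact absurd hd (by simpa [Lit.sat, Atm.sat, Term.eval, ncl, vx] using hsat)
  · simpa [Lit.sat, Atm.sat, Term.eval, pcl, vx] using hsat

@[simp] lemma headName_app (f : SkFun) (t : GTerm) :
    headName C1 (.app f t) = (skHeadPred f).2 := rfl

/-! ### The head-entailment invariant -/

lemma inv {a : GAtm} (h : Mem T C1 a) :
    (∀ P u, a = .conc P u →
       CEntails (Translation T C1 C2) {ncl false (headName C1 u) vx, pcl false P.2 vx}) ∧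
    (∀ r t u, a = .role r t u → ∃ A' B',
       u = GTerm.app (false, (ELConcept.atom A', ELConcept.ex r (.atom B'))) t ∧
       ((ELConcept.atom A', ELConcept.ex r (.atom B')) : CI) ∈ T ∧
       CEntails (Translation T C1 C2) {ncl false (headName C1 t) vx, pcl false A' vx}) := by
  induction h with
  | base =>
      refine ⟨?_, by rintro r t u ⟨⟩⟩
      rintro P u ⟨⟩
      exact centails_bin (fun α I hI d hd => hd)
  | r1 hci hm ih =>
      refine ⟨?_, by rintro r t u ⟨⟩⟩
      rintro P u ⟨⟩
      have ihc := (ih.1) _ _ rfl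
      exact centails_bin (fun α I hI d hd =>
        model_step1 hI hci (centails_bin_elim ihc hI hd))
  | r2 hci hm₁ hm₂ ih₁ ih₂ =>
      refine ⟨?_, by rintro r t u ⟨⟩⟩
      rintro P u ⟨⟩
      have ihc₁ := (ih₁.1) _ _ rfl
      have ihc₂ := (ih₂.1) _ _ rfl
      exact centails_bin (fun α I hI d hd =>
        model_step2 hI hci (centails_bin_elim ihc₁ hI hd) (centails_bin_elim ihc₂ hI hd))
  | r3 hci hmr hmc ihr ihc =>
      refine ⟨?_, by rintro r t u ⟨⟩⟩
      rintro P u ⟨⟩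
      obtain ⟨A', B', hu, hci', hce⟩ := (ihr.2) _ _ _ rfl
      have ihcc := (ihc.1) _ _ rfl
      rw [hu] at ihcc
      simp only [headName_app, skHeadPred] at ihcc
      refine centails_bin (fun α I hI d hd => ?_)
      have hA' : d ∈ I.conc (false, A') := centails_bin_elim hce hI hd
      have hrole := model_step6 hI hci' hA'
      have hB' := model_step7 hI hci' hA'
      have hA := centails_bin_elim ihcc hI hB'
      exact model_step5 hI hci hrole hA
  | r4a hci hm ih =>
      refine ⟨by rintro P u ⟨⟩, ?_⟩
      rintro r t u h'
      cases h'
      exact ⟨_, _, rfl, hci, (ih.1) _ _ rfl⟩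
  | r4b hci hm ih =>
      refine ⟨?_, by rintro r t u ⟨⟩⟩
      rintro P u ⟨⟩
      exact centails_bin (fun α I hI d hd => hd)

/-! ### Resolution steps -/

def sigG (g : GTerm) : ℕ → Term := fun n => if n = 0 then g.toTerm else .var n

lemma mgu_g (P : Bool × ℕ) (g : GTerm) :
    IsMGU (sigG g) (.conc P g.toTerm) (.conc P vx) := by
  constructor
  · show Atm.conc P (g.toTerm.subst (sigG g)) = Atm.conc P (vx.subst (sigG g))
    rw [subst_ground _ (toTerm_vars g)]
    simp [vx, Term.subst, sigG]
  · intro τ hτ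
    simp only [IsUnifier, Atm.subst, vx, Term.subst, Atm.conc.injEq] at hτ
    rw [subst_ground _ (toTerm_vars g)] at hτ
    refine ⟨τ, fun x => ?_⟩
    by_cases hx : x = 0
    · subst hx
      show (if (0:ℕ) = 0 then g.toTerm else Term.var 0).subst τ = τ 0
      rw [if_pos rfl, subst_ground _ (toTerm_vars g)]
      exact hτ.2
    · simp [sigG, hx, Term.subst]

lemma resolve_bin {Ψ' : Set Clause} {P Q : Bool × ℕ} {g : GTerm}
    (h1 : Deriv Ψ' (fun _ => True) {⟨true, .conc P g.toTerm⟩})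
    (h2 : ({⟨false, .conc P vx⟩, ⟨true, .conc Q vx⟩} : Clause) ∈ Ψ') :
    Deriv Ψ' (fun _ => True) {⟨true, .conc Q g.toTerm⟩} := by
  have hres := Deriv.res (a := .conc P g.toTerm) (b := .conc P vx) (σ := sigG g)
    h1 (Deriv.hyp h2) (Finset.mem_singleton_self _) (by simp) (mgu_g P g) trivial
  have heq : ClauseSubst (sigG g)
      (({⟨true, .conc P g.toTerm⟩} : Clause).erase ⟨true, .conc P g.toTerm⟩ ∪
       ({⟨false, .conc P vx⟩, ⟨true, .conc Q vx⟩} : Clause).erase ⟨false, .conc P vx⟩) =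
      {⟨true, .conc Q g.toTerm⟩} := by
    ext l
    simp [ClauseSubst, Lit.subst, Atm.subst, sigG, Term.subst, vx, Finset.mem_erase]
  rwa [heq] at hres

lemma resolve_I7 {Ψ' : Set Clause} {P Q : Bool × ℕ} {f : SkFun} {g : GTerm}
    (h1 : Deriv Ψ' (fun _ => True) {⟨true, .conc P g.toTerm⟩})
    (h2 : ({⟨false, .conc P vx⟩, ⟨true, .conc Q (.app f vx)⟩} : Clause) ∈ Ψ') :
    Deriv Ψ' (fun _ => True) {⟨true, .conc Q (.app f g.toTerm)⟩} := by
  have hres := Deriv.res (a := .conc P g.toTerm) (b := .conc P vx) (σ := sigG g)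
    h1 (Deriv.hyp h2) (Finset.mem_singleton_self _) (by simp) (mgu_g P g) trivial
  have heq : ClauseSubst (sigG g)
      (({⟨true, .conc P g.toTerm⟩} : Clause).erase ⟨true, .conc P g.toTerm⟩ ∪
       ({⟨false, .conc P vx⟩, ⟨true, .conc Q (.app f vx)⟩} : Clause).erase
         ⟨false, .conc P vx⟩) =
      {⟨true, .conc Q (.app f g.toTerm)⟩} := by
    ext l
    simp [ClauseSubst, Lit.subst, Atm.subst, sigG, Term.subst, vx, Finset.mem_erase]
  rwa [heq] at hres

lemma unitC_eq (P : Bool × ℕ) (g : GTerm) :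
    unitC P g = ({⟨true, .conc P g.toTerm⟩} : Clause) := rfl

/-! ### The derivation chain -/

lemma derivChain (hNF : NormalForm T) {Ψ' : Set Clause} {u0 : GTerm}
    (hu0 : unitC (false, headName C1 u0) u0 ∈ Ψ')
    (hup : ∀ c ∈ presat (Translation T C1 C2), (isI3 c ∨ isI4 c ∨ isI7 c) → c ∈ Ψ') :
    ∀ {u : GTerm}, GTerm.Subterm u0 u → Gen T C1 u →
      ∀ A : ℕ, Mem T C1 (.conc (false, A) u) →
        Deriv Ψ' (fun _ => True) (unitC (false, A) u) := by
  intro u hsub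
  induction hsub with
  | refl =>
      intro _ A hm
      have hce := (inv (C2 := C2) hm).1 _ _ rfl
      have hcmem : ({ncl false (headName C1 u0) vx, pcl false A vx} : Clause) ∈ Ψ' :=
        hup _ (Or.inr ⟨false, _, _, rfl, hce⟩)
          (Or.inl ⟨(false, headName C1 u0), (false, A), rfl⟩)
      rw [unitC_eq]
      exact resolve_bin (Deriv.hyp hu0) hcmem
  | app f hsub ih =>
      rename_i w
      intro hgen A hm
      cases hgen with
      | app hci hmw hgw =>
          rename_i A' r B'
          have hd' := ih hgw A' hmw
          have hI7 : ({ncl false A' vx,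
              pcl false B' (.app (false, (ELConcept.atom A', ELConcept.ex r (.atom B'))) vx)} :
              Clause) ∈ Ψ' := by
            refine hup _ (Or.inl (clause_mem_trans (b := false) hci (by simp [clausesOf]))) ?_
            exact Or.inr (Or.inr ⟨(false, A'), (false, B'), _, rfl⟩)
          rw [unitC_eq] at hd'
          have hd2 := resolve_I7 hd' hI7
          have hce := (inv (C2 := C2) hm).1 _ _ rfl
          simp only [headName_app, skHeadPred] at hce
          have hcmem : ({ncl false B' vx, pcl false A vx} : Clause) ∈ Ψ' :=
            hup _ (Or.inr ⟨false, _, _, rfl, hce⟩) (Or.inl ⟨(false, B'), (false, A), rfl⟩)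
          rw [unitC_eq]
          exact resolve_bin hd2 hcmem

lemma gen_app_inv {f : SkFun} {t : GTerm} (h : Gen T C1 (.app f t)) :
    ∃ A' r B', f = ((false, (ELConcept.atom A', ELConcept.ex r (.atom B'))) : SkFun) ∧
      ((ELConcept.atom A', ELConcept.ex r (.atom B')) : CI) ∈ T ∧
      Mem T C1 (.conc (false, A') t) ∧ Gen T C1 t := by
  cases h with
  | app hci hm hg => exact ⟨_, _, _, rfl, hci, hm, hg⟩

lemma anc_subterm (F : SkolemTree) {v w : ℕ} (h : F.Ancestor v w) :
    GTerm.Subterm (F.s v) (F.s w) := by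
  induction h with
  | refl => exact .refl _
  | tail _ hedge ih =>
      rcases F.edge_term _ hedge with heq | ⟨f, heq⟩
      · rw [heq]; exact ih
      · rw [heq]; exact .app f ih

end Aux

/-- Lemma on ancestors and positive labels in Skolem trees. -/
theorem positive_label_derivations
    (T : TBox) (C1 C2 : ℕ) (hNF : NormalForm T)
    (hno : ¬ Entails T (.atom C1) (.atom C2))
    (F : SkolemTree) (v₁ v₂ : ℕ) (hv₁ : v₁ ∈ F.V) (hv₂ : v₂ ∈ F.V)
    (hanc : F.Ancestor v₁ v₂)
    (sk : SkFun) (t : GTerm) (hs : F.s v₁ = GTerm.app sk t)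
    (hpos : (posLab (Translation T C1 C2) F v₂).Nonempty) :
    InPIpos Set.univ (Translation T C1 C2) (GAtm.conc (skHeadPred sk) (F.s v₁)) ∧
    ∀ A ∈ posLab (Translation T C1 C2) F v₂,
      Deriv ({unitC (skHeadPred sk) (F.s v₁)} ∪
             {c | c ∈ presat (Translation T C1 C2) ∧ (isI3 c ∨ isI4 c ∨ isI7 c)})
        (fun _ => True) (unitC (false, A) (F.s v₂)) := by
  classical
  obtain ⟨A₀, hA₀⟩ := hpos
  have hm₀ : Mem T C1 (.conc (false, A₀) (F.s v₂)) :=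
    mem_of_centails hNF hA₀.1.1
  have hgen₂ : Gen T C1 (F.s v₂) := gen_of_mem hm₀ _ rfl
  have hsub : GTerm.Subterm (F.s v₁) (F.s v₂) := anc_subterm F hanc
  have hgen₁ : Gen T C1 (F.s v₁) := gen_subterm hgen₂ hsub
  rw [hs] at hgen₁
  obtain ⟨A', r, B', hf, hci, hmt, hgt⟩ := gen_app_inv hgen₁
  have hmhead : Mem T C1 (.conc (skHeadPred sk) (F.s v₁)) := by
    rw [hs, hf]
    exact Mem.r4b hci hmt
  refine ⟨mem_prime hNF hmhead, ?_⟩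
  intro A hA
  have hm : Mem T C1 (.conc (false, A) (F.s v₂)) :=
    mem_of_centails hNF hA.1.1
  have hu0 : unitC (false, headName C1 (F.s v₁)) (F.s v₁) ∈
      ({unitC (skHeadPred sk) (F.s v₁)} ∪
       {c | c ∈ presat (Translation T C1 C2) ∧ (isI3 c ∨ isI4 c ∨ isI7 c)} :
       Set Clause) := by
    apply Set.mem_union_left
    rw [hs, hf]
    rfl
  exact derivChain hNF hu0 (fun c hc hsh => Set.mem_union_right _ ⟨hc, hsh⟩)
    hsub hgen₂ A hm


end ELAbd
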